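/- In two dimensions, interpolation followed by the vector curl equals the mimetic projection of the vector curl: for every continuously differentiable function f on [−1,1]², writing curl_v(f) = (∂f/∂η, −∂f/∂ξ) and I²f(ξ,η) = ∑_{i,j=0}^N f(ξ_i, ξ_j) l_i(ξ) l_j(η), one has curl_v(I²f) = p³(curl_v f), where the componentwise mixed projection p³ is given by p³₁(g)(ξ,η) = ∑_{i=0}^N ∑_{j=1}^N (∫_{ξ_{j−1}}^{ξ_j} g(ξ_i, s) ds) l_i(ξ) h_j(η) and p³₂(g)(ξ,η) = ∑_{i=1}^N ∑_{j=0}^N (∫_{ξ_{i−1}}^{ξ_i} g(s, ξ_j) ds) h_i(ξ) l_j(η). -/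

import Mathlib

/-!
The nodal Lagrange polynomials sum to one (their sum minus one has degree at most `N` and
vanishes at the `N + 1` nodes), so their derivatives sum to zero. Summation by parts then turns
`∑ⱼ cⱼ lⱼ'` into `∑ⱼ (cⱼ₊₁ - cⱼ) hⱼ`, and by the fundamental theorem of calculus `cⱼ₊₁ - cⱼ` is
the integral of the derivative over the edge `[ξⱼ, ξⱼ₊₁]` when `cⱼ` are the nodal values of a
`C¹` function. Applied to the slices `f (ξᵢ, ·)` and `f (·, ξⱼ)` this gives both components.
-/

open Polynomial MeasureTheory Finset Set

theorem Polynomial.sum_eq_one_of_eval_eq_ite {R : Type*} [CommRing R] [IsDomain R] {n : ℕ}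
    {x : Fin (n + 1) → R} (hx : Function.Injective x) {l : Fin (n + 1) → R[X]}
    (hdeg : ∀ i, (l i).natDegree ≤ n)
    (hlag : ∀ i j, (l i).eval (x j) = if i = j then 1 else 0) :
    ∑ i, l i = 1 := by
  rw [← sub_eq_zero]
  apply eq_zero_of_natDegree_lt_card_of_eval_eq_zero _ hx
  · intro j
    simp [eval_finsetSum, hlag]
  · rw [Fintype.card_fin, Nat.lt_succ_iff]
    exact (natDegree_sub_le _ _).trans
      (max_le (natDegree_sum_le_of_forall_le _ _ fun i _ => hdeg i) (by simp))

/-- Summation by parts against the partial sums `d 0 + ⋯ + d b`. -/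
theorem Fin.sum_sub_mul_sum_ite_lt {R : Type*} [CommRing R] :
    ∀ {n : ℕ} (c d : Fin (n + 1) → R),
      ∑ b : Fin n, (c b.succ - c b.castSucc) *
          ∑ j : Fin (n + 1), (if (j : ℕ) < b + 1 then d j else 0)
        = c (Fin.last n) * ∑ j, d j - ∑ j, c j * d j
  | 0, c, d => by simp [Fin.last]
  | n + 1, c, d => by
    have ih := Fin.sum_sub_mul_sum_ite_lt (Fin.init c) (Fin.init d)
    have hlast_not_lt : ∀ b : Fin n, ¬ (n + 1 < (b : ℕ) + 1) := fun b => by omega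
    rw [Fin.sum_univ_castSucc]
    simp only [Fin.sum_univ_castSucc (n := n + 1), Fin.val_castSucc, Fin.val_last, hlast_not_lt,
      Fin.isLt, if_true, if_false, add_zero, lt_irrefl, Fin.succ_castSucc, Fin.succ_last,
      Fin.init] at ih ⊢
    rw [ih]
    ring

theorem intervalIntegral.integral_derivWithin_eq_sub_of_Icc_subset {E : Type*}
    [NormedAddCommGroup E] [NormedSpace ℝ E] [CompleteSpace E] {g : ℝ → E} {s : Set ℝ}
    {a b : ℝ} (hg : ContDiffOn ℝ 1 g s) (hs : Icc a b ⊆ s) (hab : a ≤ b) :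
    ∫ x in a..b, derivWithin g s x = g b - g a := by
  rw [← integral_derivWithin_Icc_of_contDiffOn_Icc (hg.mono hs) hab,
    intervalIntegral.integral_of_le hab, intervalIntegral.integral_of_le hab,
    ← restrict_Ioo_eq_restrict_Ioc]
  refine MeasureTheory.integral_congr_ae ?_
  filter_upwards [self_mem_ae_restrict measurableSet_Ioo] with x hx
  have hx' : Icc a b ∈ nhds x := Icc_mem_nhds hx.1 hx.2
  rw [derivWithin_of_mem_nhds (Filter.mem_of_superset hx' hs), derivWithin_of_mem_nhds hx']

section EdgeProjection

variable {N : ℕ} {ξ : Fin (N + 1) → ℝ} {l : Fin (N + 1) → ℝ[X]} {h : Fin N → ℝ[X]}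

theorem sum_mul_derivative_lagrange_eq_sum_sub_mul_edge (hξ : Function.Injective ξ)
    (hdeg : ∀ i, (l i).natDegree ≤ N)
    (hlag : ∀ i j, (l i).eval (ξ j) = if i = j then 1 else 0)
    (hdef : ∀ i : Fin N,
      h i = -∑ j : Fin (N + 1), if (j : ℕ) < (i : ℕ) + 1 then derivative (l j) else 0)
    (c : Fin (N + 1) → ℝ) (t : ℝ) :
    ∑ b, c b * (derivative (l b)).eval t
      = ∑ b : Fin N, (c b.succ - c b.castSucc) * (h b).eval t := by
  have hsum : ∑ j, (derivative (l j)).eval t = 0 := by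
    rw [← eval_finsetSum, ← map_sum, sum_eq_one_of_eval_eq_ite hξ hdeg hlag, derivative_one,
      eval_zero]
  simp only [hdef, eval_neg, eval_finsetSum, apply_ite (eval t), eval_zero, mul_neg,
    sum_neg_distrib, Fin.sum_sub_mul_sum_ite_lt, hsum]
  ring

theorem sum_mul_derivative_lagrange_eq_sum_integral_mul_edge (hξ : StrictMono ξ)
    (hdeg : ∀ i, (l i).natDegree ≤ N)
    (hlag : ∀ i j, (l i).eval (ξ j) = if i = j then 1 else 0)
    (hdef : ∀ i : Fin N,
      h i = -∑ j : Fin (N + 1), if (j : ℕ) < (i : ℕ) + 1 then derivative (l j) else 0)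
    {g : ℝ → ℝ} {s : Set ℝ} (hg : ContDiffOn ℝ 1 g s) (hs : Icc (ξ 0) (ξ (Fin.last N)) ⊆ s)
    (t : ℝ) :
    ∑ b, g (ξ b) * (derivative (l b)).eval t
      = ∑ b : Fin N, (∫ x in ξ b.castSucc..ξ b.succ, derivWithin g s x) * (h b).eval t := by
  rw [sum_mul_derivative_lagrange_eq_sum_sub_mul_edge hξ.injective hdeg hlag hdef]
  refine sum_congr rfl fun b _ => ?_
  have hedge : Icc (ξ b.castSucc) (ξ b.succ) ⊆ s :=
    (Icc_subset_Icc (hξ.monotone (Fin.zero_le _)) (hξ.monotone (Fin.le_last _))).trans hs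
  rw [intervalIntegral.integral_derivWithin_eq_sub_of_Icc_subset hg hedge
    (hξ Fin.castSucc_lt_succ).le]

end EdgeProjection

theorem curl_v_interpolant_eq_p3_curl_v_general
    (N : ℕ) (ξ : Fin (N + 1) → ℝ)
    (hmono : StrictMono ξ) (hfirst : ξ 0 = -1) (hlast : ξ (Fin.last N) = 1)
    (l : Fin (N + 1) → Polynomial ℝ)
    (hdeg : ∀ i, (l i).natDegree ≤ N)
    (hlag : ∀ i j, (l i).eval (ξ j) = if i = j then 1 else 0)
    (h : Fin N → Polynomial ℝ)
    (hdef : ∀ i : Fin N,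
      h i = -∑ j : Fin (N + 1), if (j : ℕ) < (i : ℕ) + 1 then derivative (l j) else 0)
    (f : ℝ × ℝ → ℝ)
    (hf : ContDiffOn ℝ 1 f (Set.Icc (-1 : ℝ) 1 ×ˢ Set.Icc (-1 : ℝ) 1)) :
    ∀ x ∈ Set.Icc (-1 : ℝ) 1, ∀ y ∈ Set.Icc (-1 : ℝ) 1,
      (deriv (fun t => ∑ a : Fin (N + 1), ∑ b : Fin (N + 1),
          f (ξ a, ξ b) * (l a).eval x * (l b).eval t) y
        = ∑ a : Fin (N + 1), ∑ b : Fin N,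
            (∫ s in (ξ b.castSucc)..(ξ b.succ),
                derivWithin (fun t => f (ξ a, t)) (Set.Icc (-1 : ℝ) 1) s)
              * (l a).eval x * (h b).eval y) ∧
      (-(deriv (fun s => ∑ a : Fin (N + 1), ∑ b : Fin (N + 1),
          f (ξ a, ξ b) * (l a).eval s * (l b).eval y) x)
        = ∑ a : Fin N, ∑ b : Fin (N + 1),
            (∫ s in (ξ a.castSucc)..(ξ a.succ),
                -(derivWithin (fun u => f (u, ξ b)) (Set.Icc (-1 : ℝ) 1) s))
              * (h a).eval x * (l b).eval y) := by
  intro x _ y _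
  have hmem : ∀ i, ξ i ∈ Icc (-1 : ℝ) 1 := fun i =>
    ⟨hfirst ▸ hmono.monotone (Fin.zero_le i), hlast ▸ hmono.monotone (Fin.le_last i)⟩
  have hnodes : Icc (ξ 0) (ξ (Fin.last N)) ⊆ Icc (-1) 1 := by rw [hfirst, hlast]
  have hderiv_y : HasDerivAt (fun t => ∑ a, ∑ b, f (ξ a, ξ b) * (l a).eval x * (l b).eval t)
      (∑ a, ∑ b, f (ξ a, ξ b) * (l a).eval x * (derivative (l b)).eval y) y :=
    .fun_sum fun a _ => .fun_sum fun b _ => (Polynomial.hasDerivAt (l b) y).const_mul _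
  have hderiv_x : HasDerivAt (fun s => ∑ a, ∑ b, f (ξ a, ξ b) * (l a).eval s * (l b).eval y)
      (∑ a, ∑ b, f (ξ a, ξ b) * (derivative (l a)).eval x * (l b).eval y) x :=
    .fun_sum fun a _ => .fun_sum fun b _ =>
      ((Polynomial.hasDerivAt (l a) x).const_mul _).mul_const _
  constructor
  · rw [hderiv_y.deriv]
    refine sum_congr rfl fun a _ => ?_
    have hslice : ContDiffOn ℝ 1 (fun t => f (ξ a, t)) (Icc (-1) 1) :=
      hf.comp (contDiffOn_const.prodMk contDiffOn_id) fun t ht => ⟨hmem a, ht⟩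
    simp_rw [mul_right_comm _ ((l a).eval x), ← sum_mul,
      sum_mul_derivative_lagrange_eq_sum_integral_mul_edge hmono hdeg hlag hdef hslice hnodes]
  · rw [hderiv_x.deriv, sum_comm, ← sum_neg_distrib, sum_comm]
    refine sum_congr rfl fun b _ => ?_
    have hslice : ContDiffOn ℝ 1 (fun u => f (u, ξ b)) (Icc (-1) 1) :=
      hf.comp (contDiffOn_id.prodMk contDiffOn_const) fun u hu => ⟨hu, hmem b⟩
    simp_rw [intervalIntegral.integral_neg, ← sum_mul,
      sum_mul_derivative_lagrange_eq_sum_integral_mul_edge hmono hdeg hlag hdef hslice hnodes]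
    simp only [neg_mul, sum_neg_distrib]

/-- In two dimensions, interpolation followed by the vector curl
`curl_v(f) = (∂f/∂η, -∂f/∂ξ)` equals the mimetic projection of the vector curl:
for every continuously differentiable `f` on `[-1,1]²` and `(ξ,η) ∈ [-1,1]²`,
`curl_v(I²f) = p³(curl_v f)`, where
`p³₁(g) = ∑_{i=0}^N ∑_{j=1}^N (∫_{ξ_{j-1}}^{ξ_j} g(ξᵢ,s) ds) lᵢ(ξ) hⱼ(η)` and
`p³₂(g) = ∑_{i=1}^N ∑_{j=0}^N (∫_{ξ_{i-1}}^{ξ_i} g(s,ξⱼ) ds) hᵢ(ξ) lⱼ(η)`. -/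
theorem curl_v_interpolant_eq_p3_curl_v
    (N : ℕ) (hN : 1 ≤ N) (ξ : Fin (N + 1) → ℝ)
    (hmono : StrictMono ξ) (hfirst : ξ 0 = -1) (hlast : ξ (Fin.last N) = 1)
    (l : Fin (N + 1) → Polynomial ℝ)
    (hdeg : ∀ i, (l i).natDegree ≤ N)
    (hlag : ∀ i j, (l i).eval (ξ j) = if i = j then 1 else 0)
    (h : Fin N → Polynomial ℝ)
    (hdef : ∀ i : Fin N,
      h i = -∑ j : Fin (N + 1), if (j : ℕ) < (i : ℕ) + 1 then derivative (l j) else 0)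
    (f : ℝ × ℝ → ℝ)
    (hf : ContDiffOn ℝ 1 f (Set.Icc (-1 : ℝ) 1 ×ˢ Set.Icc (-1 : ℝ) 1)) :
    ∀ x ∈ Set.Icc (-1 : ℝ) 1, ∀ y ∈ Set.Icc (-1 : ℝ) 1,
      (deriv (fun t => ∑ a : Fin (N + 1), ∑ b : Fin (N + 1),
          f (ξ a, ξ b) * (l a).eval x * (l b).eval t) y
        = ∑ a : Fin (N + 1), ∑ b : Fin N,
            (∫ s in (ξ b.castSucc)..(ξ b.succ),
                derivWithin (fun t => f (ξ a, t)) (Set.Icc (-1 : ℝ) 1) s)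
              * (l a).eval x * (h b).eval y) ∧
      (-(deriv (fun s => ∑ a : Fin (N + 1), ∑ b : Fin (N + 1),
          f (ξ a, ξ b) * (l a).eval s * (l b).eval y) x)
        = ∑ a : Fin N, ∑ b : Fin (N + 1),
            (∫ s in (ξ a.castSucc)..(ξ a.succ),
                -(derivWithin (fun u => f (u, ξ b)) (Set.Icc (-1 : ℝ) 1) s))
              * (h a).eval x * (l b).eval y) :=
  curl_v_interpolant_eq_p3_curl_v_general N ξ hmono hfirst hlast l hdeg hlag h hdef f hf
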